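/- arXiv:1908.02744 — 3 statements merged into one kernel-verified Lean document; each statement's English description precedes it below -/
import Mathlib

section
/- Let G be a bipartite graph in which every vertex has degree at least 2 and in which every cycle of length at least 6 has a chord. Then every connected component of G contains a cycle of length exactly 4. -/
open SimpleGraph

/-- A cycle walk has a chord. -/
def HasChord {V : Type*} (G : SimpleGraph V) {v : V} (c : G.Walk v v) : Prop :=
  ∃ a b, a ∈ c.support ∧ b ∈ c.support ∧ G.Adj a b ∧ ¬ c.toSubgraph.Adj a b

/-!
Take a shortest cycle in the component of `v`; one exists because the end of a longest path
starting at `v` has all of its (at least two) neighbours on that path. Bipartiteness makes its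
length even, and at least `4`. If it were at least `6`, a chord would split it into a strictly
shorter cycle through one of its vertices, so its length is exactly `4`.
-/

namespace SimpleGraph

variable {V : Type*} {G : SimpleGraph V}

theorem hasChord_iff_not_isChordless {v : V} (c : G.Walk v v) :
    HasChord G c ↔ ¬ c.IsChordless := by
  simp [HasChord, Walk.isChordless_iff_forall_mem_edges, Walk.adj_toSubgraph_iff_mem_edges]

namespace Walk

theorem IsPath.isCycle_cons_dropUntil [DecidableEq V] {u v w : V} {p : G.Walk v u}
    (hp : p.IsPath) (hadj : G.Adj u w) (hw : w ∈ p.support) (he : s(u, w) ∉ p.edges) :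
    (cons hadj (p.dropUntil w hw)).IsCycle :=
  (cons_isCycle_iff _ hadj).mpr
    ⟨hp.dropUntil hw, fun h ↦ he (p.edges_dropUntil_subset_edges hw h)⟩

theorem IsCycle.exists_isCycle_length_lt_of_adj {a b : V} {c : G.Walk a a} (hc : c.IsCycle)
    (hab : G.Adj a b) (hb : b ∈ c.support) (he : s(a, b) ∉ c.edges) :
    ∃ d : G.Walk a a, d.IsCycle ∧ d.length < c.length := by
  classical
  cases c with
  | nil => exact (hc.not_nil .nil).elim
  | @cons _ x _ h q =>
    have hq : q.IsPath := ((cons_isCycle_iff q h).mp hc).1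
    have hbq : b ∈ q.support := by
      simpa [hab.ne'] using hb
    have hbx : b ≠ x := by
      rintro rfl
      simp at he
    refine ⟨cons hab (q.dropUntil b hbq), ?_, ?_⟩
    · exact hq.isCycle_cons_dropUntil hab hbq fun hmem ↦ he (by simp [hmem])
    · simpa using q.length_dropUntil_lt_length hbq hbx

theorem IsCycle.exists_isCycle_length_lt_of_not_isChordless {u : V} {c : G.Walk u u}
    (hc : c.IsCycle) (hch : ¬ c.IsChordless) :
    ∃ a ∈ c.support, ∃ d : G.Walk a a, d.IsCycle ∧ d.length < c.length := by
  classical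
  simp only [isChordless_iff_forall_mem_edges, not_forall] at hch
  obtain ⟨a, b, ha, hb, hab, he⟩ := hch
  obtain ⟨d, hd, hlt⟩ := (hc.rotate ha).exists_isCycle_length_lt_of_adj hab
    ((mem_support_rotate_iff c a ha).mpr hb) (fun h ↦ he ((rotate_edges c a ha).mem_iff.mp h))
  exact ⟨a, ha, d, hd, by simpa using hlt⟩

end Walk

theorem exists_isPath_from_forall_isPath_length_le_length [Finite V] (v : V) :
    ∃ (u : V) (p : G.Walk v u), p.IsPath ∧
      ∀ (u' : V) (q : G.Walk v u'), q.IsPath → q.length ≤ p.length := by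
  classical
  have := Fintype.ofFinite V
  have : Nonempty (Σ u, G.Path v u) := ⟨⟨v, Path.nil⟩⟩
  obtain ⟨⟨u, p⟩, hmax⟩ := Finite.exists_max fun x : Σ u, G.Path v u ↦ x.2.1.length
  exact ⟨u, p, p.2, fun u' q hq ↦ hmax ⟨u', q, hq⟩⟩

theorem exists_isCycle_reachable_of_two_le_degree [Finite V] [G.LocallyFinite]
    (hdeg : ∀ v, 2 ≤ G.degree v) (v : V) :
    ∃ (u : V) (c : G.Walk u u), c.IsCycle ∧ G.Reachable v u := by
  classical
  obtain ⟨u, p, hp, hmax⟩ := exists_isPath_from_forall_isPath_length_le_length (G := G) v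
  have hnbr : ∀ w, G.Adj u w → w ∈ p.support := by
    intro w hadj
    by_contra hw
    have := hmax w _ (hp.concat hw hadj)
    rw [Walk.length_concat] at this
    omega
  obtain ⟨w, hw, hne⟩ := Finset.exists_mem_ne
    ((hdeg u).trans_eq (G.card_neighborFinset_eq_degree u).symm) p.penultimate
  rw [mem_neighborFinset] at hw
  exact ⟨u, _, hp.isCycle_cons_dropUntil hw (hnbr w hw)
    (fun he ↦ hne (hp.eq_penultimate_of_mem_edges he)), p.reachable⟩

theorem exists_isCycle_length_eq_four_reachable (hbip : G.Colorable 2)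
    (hchord : ∀ (v : V) (c : G.Walk v v), c.IsCycle → 6 ≤ c.length → HasChord G c)
    {u : V} (c : G.Walk u u) (hc : c.IsCycle) :
    ∃ (w : V) (d : G.Walk w w), d.IsCycle ∧ d.length = 4 ∧ G.Reachable u w := by
  classical
  induction h : c.length using Nat.strong_induction_on generalizing u c with
  | _ n ih =>
    by_cases h6 : n < 6
    · obtain ⟨k, hk⟩ := two_colorable_iff_forall_loop_even.mp hbip u c
      have := hc.three_le_length
      exact ⟨u, c, hc, by omega, .rfl⟩
    · obtain ⟨a, ha, d, hd, hlt⟩ := hc.exists_isCycle_length_lt_of_not_isChordless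
        ((hasChord_iff_not_isChordless c).mp (hchord u c hc (by omega)))
      obtain ⟨w, e, he, hlen, hreach⟩ := ih _ (h ▸ hlt) d hd rfl
      exact ⟨w, e, he, hlen, (c.takeUntil a ha).reachable.trans hreach⟩

end SimpleGraph

theorem component_contains_four_cycle_general
    {V : Type*} [Fintype V] (G : SimpleGraph V) [DecidableRel G.Adj]
    (hbip : G.Colorable 2)
    (hdeg : ∀ v : V, 2 ≤ G.degree v)
    (hchord : ∀ (v : V) (c : G.Walk v v), c.IsCycle → 6 ≤ c.length → HasChord G c) :
    ∀ v : V, ∃ (u : V) (c : G.Walk u u), c.IsCycle ∧ c.length = 4 ∧ G.Reachable v u := by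
  intro v
  obtain ⟨u, c, hc, hvu⟩ := exists_isCycle_reachable_of_two_le_degree hdeg v
  obtain ⟨w, d, hd, hlen, huw⟩ := exists_isCycle_length_eq_four_reachable hbip hchord c hc
  exact ⟨w, d, hd, hlen, hvu.trans huw⟩

/-- If `G` is a bipartite graph in which every vertex has degree at least 2
and every cycle of length at least 6 has a chord, then every connected component of `G`
contains a cycle of length exactly 4. -/
theorem component_contains_four_cycle
    {V : Type*} [Fintype V] [DecidableEq V] (G : SimpleGraph V) [DecidableRel G.Adj]
    (hbip : G.Colorable 2)
    (hdeg : ∀ v : V, 2 ≤ G.degree v)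
    (hchord : ∀ (v : V) (c : G.Walk v v), c.IsCycle → 6 ≤ c.length → HasChord G c) :
    ∀ v : V, ∃ (u : V) (c : G.Walk u u), c.IsCycle ∧ c.length = 4 ∧ G.Reachable v u :=
  component_contains_four_cycle_general G hbip hdeg hchord
end

section
/- Let G be a connected bipartite graph in which every vertex has degree at least 2, every cycle of length at least 6 has a chord, and suppose G contains an induced path on 6 vertices v1,...,v6 (a path of length 5 with no chords in G). If there exist vertices w1, w2 distinct from v1,...,v6 such that v1,w1,w2,v6 is a path, then G contains an induced subgraph isomorphic to two 4-cycles sharing exactly one edge (the graph on vertices x1,x2,x3,y1,y2,y3 with edges x1y1, x1y2, x2y1, x2y2, x2y3, x3y2, x3y3). -/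
/-!
Write `u = (v 0, …, v 5, w₂, w₁)`, an 8-cycle. Colouring the positions of a cycle in a bipartite
graph by parity shows that a chord of a hexagon joins opposite vertices and a chord of an octagon
joins vertices three steps apart; as `v` is induced, the chord of `u` is one of `u 6 u 1`,
`u 7 u 4`, `u 7 u 2`, `u 6 u 3`, and reversing the path swaps the first two and the last two.
If `u 6 u 1` is an edge, the chord of the hexagon `u 1 … u 6` is `u 6 u 3`, and
`{u 2, u 6, u 4}, {u 1, u 3, u 5}` spans a domino. Otherwise, up to reversal, neither `u 6 u 1`
nor `u 7 u 4` is an edge, and the hexagon `u 7 u 2 … u 6` turns either of `u 7 u 2`, `u 6 u 3`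
into the other; then `{u 0, u 2, u 6}, {u 1, u 7, u 3}` spans a domino. Both sides of a domino
are independent because a bipartite graph has no triangles.
-/

open SimpleGraph

namespace SimpleGraph

theorem cycleGraph.toSubgraph_cycle_adj {n : ℕ} {i j : Fin (n + 3)}
    (h : (cycleGraph (n + 3)).Adj i j) : (cycleGraph.cycle n).toSubgraph.Adj i j := by
  replace h : i = j + 1 ∨ j = i + 1 := by
    simpa only [cycleGraph_adj, sub_eq_iff_eq_add, add_comm (1 : Fin _)] using h
  wlog hij : i = j + 1 generalizing i j
  · exact (this h.symm (h.resolve_left hij)).symm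
  subst hij
  rw [Walk.toSubgraph_adj_iff]
  -- `cycleGraph.cycle n` runs `0, n + 2, n + 1, …, 1, 0`, so it crosses `{j + 1, j}` at step
  -- `n + 2 - j`, or at step `0` when `j` is the last vertex.
  rcases (Fin.le_last j).lt_or_eq with hj | rfl
  · have hj1 := Fin.val_add_one_of_lt hj
    refine ⟨n + 2 - j.val, ?_, by simp; omega⟩
    rw [cycleGraph.getVert_cycle (by omega), cycleGraph.getVert_cycle (by omega)]
    rw [Fin.lt_def, Fin.val_last] at hj
    congr 1 <;> ext <;> simp only [hj1] <;> rw [Nat.mod_eq_of_lt (by omega)] <;> omega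
  · refine ⟨0, ?_, by simp⟩
    rw [cycleGraph.getVert_cycle (by omega), cycleGraph.getVert_cycle (by omega)]
    simp [Fin.ext_iff]

theorem cycleGraph.coloring_eq_iff {n : ℕ} (c : (cycleGraph (n + 2)).Coloring (Fin 2))
    (i j : Fin (n + 2)) : c i = c j ↔ i.val % 2 = j.val % 2 := by
  have hval : ∀ k (hk : k < n + 2), (c ⟨k, hk⟩).val = ((c 0).val + k) % 2 := by
    intro k hk
    induction k with
    | zero => simp [Nat.mod_eq_of_lt (c 0).isLt]
    | succ k ih =>
      have hne := c.valid (show (cycleGraph (n + 2)).Adj ⟨k + 1, hk⟩ ⟨k, by omega⟩ by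
        rw [cycleGraph_adj']; left; rw [Fin.sub_val_of_le (by simp)]; simp)
      have := ih (by omega)
      have := (c ⟨k + 1, hk⟩).isLt
      have := (c ⟨k, by omega⟩).isLt
      rw [Ne, Fin.ext_iff] at hne
      omega
  rw [Fin.ext_iff, hval i i.isLt, hval j j.isLt]
  omega

variable {V : Type*} {G : SimpleGraph V}

def cycleGraph.homOfAdj {n : ℕ} (c : Fin (n + 2) → V) (hc : ∀ i, G.Adj (c i) (c (i + 1))) :
    cycleGraph (n + 2) →g G where
  toFun := c
  map_rel' {i j} h := by
    obtain rfl | rfl : i = j + 1 ∨ j = i + 1 := by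
      simpa only [cycleGraph_adj, sub_eq_iff_eq_add, add_comm (1 : Fin _)] using h
    exacts [(hc j).symm, hc i]

theorem exists_adj_parity_ne_of_forall_hasChord (hbip : G.Colorable 2)
    (hchord : ∀ (v : V) (c : G.Walk v v), c.IsCycle → 6 ≤ c.length → HasChord G c)
    {n : ℕ} (hn : 3 ≤ n) (c : Fin (n + 3) → V) (hinj : Function.Injective c)
    (hc : ∀ i, G.Adj (c i) (c (i + 1))) :
    ∃ i j, ¬(cycleGraph (n + 3)).Adj i j ∧ i.val % 2 ≠ j.val % 2 ∧ G.Adj (c i) (c j) := by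
  let f : cycleGraph (n + 3) →g G := cycleGraph.homOfAdj c hc
  obtain ⟨a, b, ha, hb, hab, hnot⟩ := hchord _ ((cycleGraph.cycle n).map f)
    ((Walk.isCycle_map_iff_of_injective hinj).2 cycleGraph.isCycle_cycle) (by simp; omega)
  simp only [Walk.support_map, List.mem_map] at ha hb
  obtain ⟨i, -, rfl⟩ := ha
  obtain ⟨j, -, rfl⟩ := hb
  obtain ⟨C⟩ := hbip
  refine ⟨i, j, fun hij => hnot ?_, fun hpar => C.valid hab ?_, hab⟩
  · rw [Walk.toSubgraph_map, Subgraph.map_adj]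
    exact ⟨i, j, cycleGraph.toSubgraph_cycle_adj hij, rfl, rfl⟩
  · exact (cycleGraph.coloring_eq_iff (C.comp f) i j).2 hpar

theorem exists_adj_add_three_of_hexagon (hbip : G.Colorable 2)
    (hchord : ∀ (v : V) (c : G.Walk v v), c.IsCycle → 6 ≤ c.length → HasChord G c)
    (c : Fin 6 → V) (hinj : Function.Injective c) (hc : ∀ i, G.Adj (c i) (c (i + 1))) :
    ∃ i, G.Adj (c i) (c (i + 3)) := by
  obtain ⟨i, j, hij, hpar, hadj⟩ :=
    exists_adj_parity_ne_of_forall_hasChord hbip hchord le_rfl c hinj hc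
  have : ∀ i j : Fin 6, ¬(cycleGraph 6).Adj i j → i.val % 2 ≠ j.val % 2 → j = i + 3 := by
    decide
  exact ⟨i, this i j hij hpar ▸ hadj⟩

theorem exists_adj_add_three_of_octagon (hbip : G.Colorable 2)
    (hchord : ∀ (v : V) (c : G.Walk v v), c.IsCycle → 6 ≤ c.length → HasChord G c)
    (c : Fin 8 → V) (hinj : Function.Injective c) (hc : ∀ i, G.Adj (c i) (c (i + 1))) :
    ∃ i, G.Adj (c i) (c (i + 3)) := by
  obtain ⟨i, j, hij, hpar, hadj⟩ :=
    exists_adj_parity_ne_of_forall_hasChord hbip hchord (by norm_num) c hinj hc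
  have : ∀ i j : Fin 8, ¬(cycleGraph 8).Adj i j → i.val % 2 ≠ j.val % 2 →
      j = i + 3 ∨ i = j + 3 := by
    decide
  rcases this i j hij hpar with rfl | rfl
  exacts [⟨i, hadj⟩, ⟨j, hadj.symm⟩]

/-- `G` contains an induced domino: the 4-cycles `x 0 y 0 x 1 y 1` and `x 1 y 1 x 2 y 2` sharing
the edge `x 1 y 1`. -/
def HasInducedDomino (G : SimpleGraph V) : Prop :=
  ∃ x y : Fin 3 → V,
    Function.Injective (Sum.elim x y : Fin 3 ⊕ Fin 3 → V) ∧
    (∀ i j : Fin 3, G.Adj (x i) (y j) ↔ (¬(i = 0 ∧ j = 2) ∧ ¬(i = 2 ∧ j = 0))) ∧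
    (∀ i j : Fin 3, ¬ G.Adj (x i) (x j)) ∧
    (∀ i j : Fin 3, ¬ G.Adj (y i) (y j))

theorem CliqueFree.not_adj_of_adj_of_adj (hG : G.CliqueFree 3) {a b c : V}
    (hab : G.Adj a b) (hbc : G.Adj b c) : ¬G.Adj a c :=
  fun hac => by classical exact hG {a, b, c} (is3Clique_triple_iff.2 ⟨hab, hac, hbc⟩)

theorem hasInducedDomino_of_cliqueFree (hG : G.CliqueFree 3) (x y : Fin 3 → V)
    (hinj : Function.Injective (Sum.elim x y))
    (h00 : G.Adj (x 0) (y 0)) (h01 : G.Adj (x 0) (y 1)) (h10 : G.Adj (x 1) (y 0))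
    (h11 : G.Adj (x 1) (y 1)) (h12 : G.Adj (x 1) (y 2)) (h21 : G.Adj (x 2) (y 1))
    (h22 : G.Adj (x 2) (y 2)) (h02 : ¬G.Adj (x 0) (y 2)) (h20 : ¬G.Adj (x 2) (y 0)) :
    HasInducedDomino G := by
  have hx1 : ∀ i, G.Adj (x i) (y 1) := by intro i; fin_cases i <;> assumption
  have hy1 : ∀ j, G.Adj (x 1) (y j) := by intro j; fin_cases j <;> assumption
  refine ⟨x, y, hinj, ?_, fun i j => hG.not_adj_of_adj_of_adj (hx1 i) (hx1 j).symm,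
    fun i j => hG.not_adj_of_adj_of_adj (hy1 i).symm (hy1 j)⟩
  intro i j
  fin_cases i <;> fin_cases j <;> simp [*]

/-- An 8-cycle `u 0, …, u 7` of `G` whose arc `u 0, …, u 5` is an induced path. -/
structure IsOctagonWithInducedArc (G : SimpleGraph V) (u : Fin 8 → V) : Prop where
  injective : Function.Injective u
  adj_add_one (i : Fin 8) : G.Adj (u i) (u (i + 1))
  not_adj ⦃i j : Fin 8⦄ : i < 6 ∧ j < 6 ∧ j ≠ i + 1 ∧ i ≠ j + 1 → ¬G.Adj (u i) (u j)

namespace IsOctagonWithInducedArc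

variable {u : Fin 8 → V} (h : IsOctagonWithInducedArc G u)
include h

theorem reverse : IsOctagonWithInducedArc G (u ∘ (5 - ·)) where
  injective := h.injective.comp sub_right_injective
  adj_add_one i := by
    have e : ∀ i : Fin 8, 4 - i + 1 = 5 - i ∧ 4 - i = 5 - (i + 1) := by decide
    have := (h.adj_add_one (4 - i)).symm
    rwa [(e i).1, (e i).2] at this
  not_adj i j hij := h.not_adj (by revert i j; decide)

variable (hbip : G.Colorable 2)
    (hchord : ∀ (v : V) (c : G.Walk v v), c.IsCycle → 6 ≤ c.length → HasChord G c)
include hbip hchord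

theorem chord_cases :
    G.Adj (u 6) (u 1) ∨ G.Adj (u 7) (u 4) ∨ G.Adj (u 7) (u 2) ∨ G.Adj (u 6) (u 3) := by
  obtain ⟨i, hi⟩ := exists_adj_add_three_of_octagon hbip hchord u h.injective h.adj_add_one
  fin_cases i
  · exact absurd hi (h.not_adj (by decide))
  · exact absurd hi (h.not_adj (by decide))
  · exact absurd hi (h.not_adj (by decide))
  · exact .inr <| .inr <| .inr hi.symm
  · exact .inr <| .inl hi.symm
  · exact absurd hi (h.not_adj (by decide))
  · exact .inl hi
  · exact .inr <| .inr <| .inl hi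

theorem adj_six_three_of_adj_six_one (hA : G.Adj (u 6) (u 1)) : G.Adj (u 6) (u 3) := by
  obtain ⟨i, hi⟩ := exists_adj_add_three_of_hexagon hbip hchord (u ∘ ![1, 2, 3, 4, 5, 6])
    (h.injective.comp (by decide)) (by
      intro i; fin_cases i
      exacts [h.adj_add_one 1, h.adj_add_one 2, h.adj_add_one 3, h.adj_add_one 4,
        h.adj_add_one 5, hA])
  fin_cases i
  · exact absurd hi (h.not_adj (by decide))
  · exact absurd hi (h.not_adj (by decide))
  · exact hi.symm
  · exact absurd hi (h.not_adj (by decide))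
  · exact absurd hi (h.not_adj (by decide))
  · exact hi

theorem hasInducedDomino_of_adj_six_one (hA : G.Adj (u 6) (u 1)) : HasInducedDomino G :=
  hasInducedDomino_of_cliqueFree (hbip.cliqueFree (by norm_num))
    (u ∘ ![2, 6, 4]) (u ∘ ![1, 3, 5])
    (by rw [← Sum.comp_elim]; exact h.injective.comp (by decide))
    (h.adj_add_one 1).symm (h.adj_add_one 2) hA (h.adj_six_three_of_adj_six_one hbip hchord hA)
    (h.adj_add_one 5).symm (h.adj_add_one 3).symm (h.adj_add_one 4)
    (h.not_adj (by decide)) (h.not_adj (by decide))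

theorem adj_seven_four_or_adj_six_three_of_adj_seven_two (hC : G.Adj (u 7) (u 2)) :
    G.Adj (u 7) (u 4) ∨ G.Adj (u 6) (u 3) := by
  obtain ⟨i, hi⟩ := exists_adj_add_three_of_hexagon hbip hchord (u ∘ ![7, 2, 3, 4, 5, 6])
    (h.injective.comp (by decide)) (by
      intro i; fin_cases i
      exacts [hC, h.adj_add_one 2, h.adj_add_one 3, h.adj_add_one 4, h.adj_add_one 5,
        h.adj_add_one 6])
  fin_cases i
  · exact .inl hi
  · exact absurd hi (h.not_adj (by decide))
  · exact .inr hi.symm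
  · exact .inl hi.symm
  · exact absurd hi (h.not_adj (by decide))
  · exact .inr hi

theorem hasInducedDomino : HasInducedDomino G := by
  by_cases hA : G.Adj (u 6) (u 1)
  · exact h.hasInducedDomino_of_adj_six_one hbip hchord hA
  by_cases hB : G.Adj (u 7) (u 4)
  · exact h.reverse.hasInducedDomino_of_adj_six_one hbip hchord hB
  obtain ⟨hC, hD⟩ : G.Adj (u 7) (u 2) ∧ G.Adj (u 6) (u 3) := by
    rcases h.chord_cases hbip hchord with hA' | hB' | hC | hD
    · exact absurd hA' hA
    · exact absurd hB' hB
    · exact ⟨hC, (h.adj_seven_four_or_adj_six_three_of_adj_seven_two hbip hchord hC).resolve_left hB⟩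
    · exact ⟨(h.reverse.adj_seven_four_or_adj_six_three_of_adj_seven_two hbip hchord hD).resolve_left hA, hD⟩
  exact hasInducedDomino_of_cliqueFree (hbip.cliqueFree (by norm_num))
    (u ∘ ![0, 2, 6]) (u ∘ ![1, 7, 3])
    (by rw [← Sum.comp_elim]; exact h.injective.comp (by decide))
    (h.adj_add_one 0) (h.adj_add_one 7).symm (h.adj_add_one 1).symm hC.symm (h.adj_add_one 2)
    (h.adj_add_one 6) hD (h.not_adj (by decide)) hA

end IsOctagonWithInducedArc

end SimpleGraph

theorem induced_two_four_cycles_sharing_edge_general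
    {V : Type*} (G : SimpleGraph V)
    (hbip : G.Colorable 2)
    (hchord : ∀ (v : V) (c : G.Walk v v), c.IsCycle → 6 ≤ c.length → HasChord G c)
    (v : Fin 6 → V) (hvinj : Function.Injective v)
    (hvpath : ∀ i j : Fin 6, G.Adj (v i) (v j) ↔ (i.val + 1 = j.val ∨ j.val + 1 = i.val))
    (w₁ w₂ : V) (hw : w₁ ≠ w₂) (hw₁ : ∀ i, w₁ ≠ v i) (hw₂ : ∀ i, w₂ ≠ v i)
    (h1 : G.Adj (v 0) w₁) (h2 : G.Adj w₁ w₂) (h3 : G.Adj w₂ (v 5)) :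
    ∃ x y : Fin 3 → V,
      Function.Injective (Sum.elim x y : Fin 3 ⊕ Fin 3 → V) ∧
      (∀ i j : Fin 3, G.Adj (x i) (y j) ↔ (¬(i = 0 ∧ j = 2) ∧ ¬(i = 2 ∧ j = 0))) ∧
      (∀ i j : Fin 3, ¬ G.Adj (x i) (x j)) ∧
      (∀ i j : Fin 3, ¬ G.Adj (y i) (y j)) := by
  let u : Fin 8 → V := ![v 0, v 1, v 2, v 3, v 4, v 5, w₂, w₁]
  have hu_arc : ∀ (i : Fin 8) (hi : i < 6), u i = v (i.castLT hi) := by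
    intro i hi
    fin_cases i <;> first | rfl | exact absurd hi (by decide)
  have hu : IsOctagonWithInducedArc G u := by
    refine ⟨?_, ?_, ?_⟩
    · rw [← List.nodup_ofFn]
      simp [u, hvinj.eq_iff, hw.symm, (hw₁ _).symm, (hw₂ _).symm]
    · intro i
      fin_cases i
      exacts [(hvpath 0 1).2 (by decide), (hvpath 1 2).2 (by decide), (hvpath 2 3).2 (by decide),
        (hvpath 3 4).2 (by decide), (hvpath 4 5).2 (by decide), h3.symm, h2.symm, h1.symm]
    · rintro i j ⟨hi, hj, hij, hji⟩ hadj
      rw [hu_arc i hi, hu_arc j hj, hvpath] at hadj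
      simp only [Fin.val_castLT] at hadj
      omega
  exact hu.hasInducedDomino hbip hchord

/-- Let `G` be a connected bipartite graph with minimum degree at least 2 in
which every cycle of length at least 6 has a chord, containing an induced path `v₁,…,v₆`.  If
there are further vertices `w₁, w₂` with `v₁,w₁,w₂,v₆` a path, then `G` contains an induced
subgraph isomorphic to two 4-cycles sharing exactly one edge. -/
theorem induced_two_four_cycles_sharing_edge
    {V : Type*} [Fintype V] [DecidableEq V] (G : SimpleGraph V) [DecidableRel G.Adj]
    (hcon : G.Connected) (hbip : G.Colorable 2)
    (hdeg : ∀ v : V, 2 ≤ G.degree v)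
    (hchord : ∀ (v : V) (c : G.Walk v v), c.IsCycle → 6 ≤ c.length → HasChord G c)
    (v : Fin 6 → V) (hvinj : Function.Injective v)
    (hvpath : ∀ i j : Fin 6, G.Adj (v i) (v j) ↔ (i.val + 1 = j.val ∨ j.val + 1 = i.val))
    (w₁ w₂ : V) (hw : w₁ ≠ w₂) (hw₁ : ∀ i, w₁ ≠ v i) (hw₂ : ∀ i, w₂ ≠ v i)
    (h1 : G.Adj (v 0) w₁) (h2 : G.Adj w₁ w₂) (h3 : G.Adj w₂ (v 5)) :
    ∃ x y : Fin 3 → V,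
      Function.Injective (Sum.elim x y : Fin 3 ⊕ Fin 3 → V) ∧
      (∀ i j : Fin 3, G.Adj (x i) (y j) ↔ (¬(i = 0 ∧ j = 2) ∧ ¬(i = 2 ∧ j = 0))) ∧
      (∀ i j : Fin 3, ¬ G.Adj (x i) (x j)) ∧
      (∀ i j : Fin 3, ¬ G.Adj (y i) (y j)) :=
  induced_two_four_cycles_sharing_edge_general G hbip hchord v hvinj hvpath w₁ w₂ hw hw₁ hw₂ h1 h2
    h3
end

section
/- Let G be a bipartite graph with parts X and Y in which every vertex has degree at least 2, and suppose G is not complete bipartite and the bipartite complement of G (after removing isolated vertices) is a tree of diameter at most 3. Then G contains vertices x, x', x'' ∈ X and y, y', y'' ∈ Y such that the induced subgraph on these six vertices has exactly the edges {x,y'},{x,y''},{x',y},{x'',y},{x',y'},{x',y''},{x'',y'},{x'',y''} (i.e., K_{3,3} minus a perfect matching edge {x,y}, with {x,y} a non-edge). -/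
/-! Take a non-edge `xy` of `G`, two neighbours `y', y''` of `x` and two neighbours `x', x''` of
`y`; it remains to see that each of `x', x''` is adjacent to each `y', y''`. If `x'y'` were a
non-edge, then `xy` and `x'y'` would be two disjoint edges of the complement tree `T`. Since `T`
is bipartite with diameter at most 3, `x` and `x'` have a common neighbour `z` in `T`, and `z` is
neither `y` nor `y'` because `xy'` and `x'y` are edges of `G`. So `y x z x' y'` is a path of
length 4 in `T`, the unique one between its ends, contradicting the diameter bound. -/

open SimpleGraph

/-- Bipartite complement of a bipartite graph on `α ⊕ β`. -/
def bipCompl {α β : Type*} (G : SimpleGraph (α ⊕ β)) : SimpleGraph (α ⊕ β) where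
  Adj u v := ∃ a b, ((u = Sum.inl a ∧ v = Sum.inr b) ∨ (u = Sum.inr b ∧ v = Sum.inl a)) ∧
    ¬ G.Adj (Sum.inl a) (Sum.inr b)
  symm := by
    refine ⟨?_⟩
    rintro u v ⟨a, b, h, hn⟩
    exact ⟨a, b, by tauto, hn⟩
  loopless := by
    refine ⟨?_⟩
    rintro u ⟨a, b, (⟨h1, h2⟩ | ⟨h1, h2⟩), hn⟩ <;> simp_all

namespace SimpleGraph

variable {V : Type*} {G : SimpleGraph V}

lemma IsAcyclic.length_eq_dist_of_isPath (hG : G.IsAcyclic) {u v : V} {p : G.Walk u v}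
    (hp : p.IsPath) : p.length = G.dist u v := by
  obtain ⟨q, hq, hql⟩ := p.reachable.exists_path_of_dist
  have hpq : (⟨p, hp⟩ : G.Path u v) = ⟨q, hq⟩ := (hG.subsingleton_path u v).elim _ _
  rw [← hql, show p = q from congrArg Subtype.val hpq]

lemma Connected.exists_adj_adj_of_color_eq (hG : G.Connected) (c : G.Coloring Bool)
    (hdiam : ∀ u v, G.dist u v ≤ 3) {u v : V} (huv : u ≠ v) (hc : c u = c v) :
    ∃ w, G.Adj u w ∧ G.Adj w v := by
  obtain ⟨p, hp⟩ := hG.exists_walk_length_eq_dist u v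
  have heven : Even p.length := (c.even_length_iff_congr p).mpr (by rw [hc])
  have hpos : p.length ≠ 0 := fun h => huv (Walk.eq_of_length_eq_zero h)
  have hlen : p.length = 2 := by
    obtain ⟨k, hk⟩ := heven
    have := hdiam u v
    omega
  refine ⟨p.getVert 1, by simpa using p.adj_getVert_succ (i := 0) (by omega), ?_⟩
  have hend : p.getVert 2 = v := hlen ▸ p.getVert_length
  simpa [hend] using p.adj_getVert_succ (i := 1) (by omega)

lemma IsTree.adj_or_adj_of_color_eq (hG : G.IsTree) (c : G.Coloring Bool)
    (hdiam : ∀ u v, G.dist u v ≤ 3) {u₀ v₀ u v : V} (h₀ : G.Adj u₀ v₀) (h : G.Adj u v)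
    (hu : u₀ ≠ u) (hc : c u₀ = c u) : G.Adj u₀ v ∨ G.Adj u v₀ := by
  obtain ⟨w, hu₀w, hwu⟩ := hG.connected.exists_adj_adj_of_color_eq c hdiam hu hc
  by_contra! hne
  have hwv : w ≠ v := by rintro rfl; exact hne.1 hu₀w
  have hwv₀ : w ≠ v₀ := by rintro rfl; exact hne.2 hwu.symm
  have hv₀u : v₀ ≠ u := by rintro rfl; exact c.valid h₀ hc
  have hv₀v : v₀ ≠ v := by rintro rfl; exact hne.2 h
  have hu₀v : u₀ ≠ v := by rintro rfl; exact c.valid h hc.symm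
  let p : G.Walk v₀ v := .cons h₀.symm (.cons hu₀w (.cons hwu (.cons h .nil)))
  have hp : p.IsPath := by
    simp [p, Walk.isPath_def, h₀.ne.symm, hu₀w.ne, hwu.ne, h.ne, hu, hwv, hwv₀.symm, hv₀u,
      hv₀v, hu₀v]
  have h4 : G.dist v₀ v = 4 := (hG.isAcyclic.length_eq_dist_of_isPath hp).symm
  have := hdiam v₀ v
  omega

lemma exists_ne_adj_adj_of_two_le_degree {v : V} [Fintype (G.neighborSet v)]
    (h : 2 ≤ G.degree v) : ∃ u w, u ≠ w ∧ G.Adj v u ∧ G.Adj v w := by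
  rw [← card_neighborFinset_eq_degree] at h
  obtain ⟨u, hu, w, hw, hne⟩ := Finset.one_lt_card.mp h
  exact ⟨u, w, hne, (mem_neighborFinset _ _ _).mp hu, (mem_neighborFinset _ _ _).mp hw⟩

end SimpleGraph

section

variable {α β : Type*} {G : SimpleGraph (α ⊕ β)}

@[simp]
lemma bipCompl_adj_inl_inr {a : α} {b : β} :
    (bipCompl G).Adj (.inl a) (.inr b) ↔ ¬ G.Adj (.inl a) (.inr b) := by
  constructor
  · rintro ⟨a', b', (⟨ha, hb⟩ | ⟨ha, -⟩), hn⟩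
    · cases ha; cases hb; exact hn
    · cases ha
  · exact fun h => ⟨a, b, .inl ⟨rfl, rfl⟩, h⟩

def bipComplColoring (G : SimpleGraph (α ⊕ β)) : (bipCompl G).Coloring Bool :=
  Coloring.mk Sum.isLeft <| by rintro _ _ ⟨a, b, (⟨rfl, rfl⟩ | ⟨rfl, rfl⟩), -⟩ <;> simp

lemma adj_of_not_adj_of_adj_of_adj
    (htree : ((bipCompl G).induce (bipCompl G).support).IsTree)
    (hdiam : ∀ u v, ((bipCompl G).induce (bipCompl G).support).dist u v ≤ 3)
    {a₀ a : α} {b₀ b : β} (h₀ : ¬ G.Adj (.inl a₀) (.inr b₀)) (ha₀ : G.Adj (.inl a₀) (.inr b))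
    (hb₀ : G.Adj (.inl a) (.inr b₀)) : G.Adj (.inl a) (.inr b) := by
  by_contra h
  have e₀ : (bipCompl G).Adj (.inl a₀) (.inr b₀) := bipCompl_adj_inl_inr.mpr h₀
  have e : (bipCompl G).Adj (.inl a) (.inr b) := bipCompl_adj_inl_inr.mpr h
  have ha : a₀ ≠ a := by rintro rfl; exact h₀ hb₀
  let c := (bipComplColoring G).comp (Embedding.induce (bipCompl G).support).toHom
  rcases htree.adj_or_adj_of_color_eq c hdiam (u₀ := ⟨_, _, e₀⟩) (v₀ := ⟨_, _, e₀.symm⟩)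
    (u := ⟨_, _, e⟩) (v := ⟨_, _, e.symm⟩) e₀ e (by simpa [Subtype.ext_iff] using ha) rfl
    with h' | h'
  · exact bipCompl_adj_inl_inr.mp h' ha₀
  · exact bipCompl_adj_inl_inr.mp h' hb₀

lemma exists_ne_adj_inr_of_two_le_degree (hX : ∀ a a' : α, ¬ G.Adj (.inl a) (.inl a')) {a : α}
    [Fintype (G.neighborSet (.inl a))] (h : 2 ≤ G.degree (.inl a)) :
    ∃ b b', b ≠ b' ∧ G.Adj (.inl a) (.inr b) ∧ G.Adj (.inl a) (.inr b') := by
  obtain ⟨a₁ | b, a₂ | b', hne, h₁, h₂⟩ := exists_ne_adj_adj_of_two_le_degree h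
  any_goals exact absurd h₁ (hX _ _)
  · exact absurd h₂ (hX _ _)
  · exact ⟨b, b', fun e => hne (congrArg _ e), h₁, h₂⟩

lemma exists_ne_adj_inl_of_two_le_degree (hY : ∀ b b' : β, ¬ G.Adj (.inr b) (.inr b')) {b : β}
    [Fintype (G.neighborSet (.inr b))] (h : 2 ≤ G.degree (.inr b)) :
    ∃ a a', a ≠ a' ∧ G.Adj (.inl a) (.inr b) ∧ G.Adj (.inl a') (.inr b) := by
  obtain ⟨a | b₁, a' | b₂, hne, h₁, h₂⟩ := exists_ne_adj_adj_of_two_le_degree h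
  any_goals exact absurd h₂ (hY _ _)
  · exact ⟨a, a', fun e => hne (congrArg _ e), h₁.symm, h₂.symm⟩
  · exact absurd h₁ (hY _ _)

end

theorem induced_K33_minus_edge_general
    {α β : Type*} [Fintype α] [Fintype β]
    (G : SimpleGraph (α ⊕ β)) [DecidableRel G.Adj]
    (hX : ∀ a a' : α, ¬ G.Adj (Sum.inl a) (Sum.inl a'))
    (hY : ∀ b b' : β, ¬ G.Adj (Sum.inr b) (Sum.inr b'))
    (hdeg : ∀ v : α ⊕ β, 2 ≤ G.degree v)
    (hnc : ¬ ∀ (a : α) (b : β), G.Adj (Sum.inl a) (Sum.inr b))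
    (htree : ((bipCompl G).induce (bipCompl G).support).IsTree)
    (hdiam : ∀ u v, ((bipCompl G).induce (bipCompl G).support).dist u v ≤ 3) :
    ∃ (x x' x'' : α) (y y' y'' : β),
      x ≠ x' ∧ x ≠ x'' ∧ x' ≠ x'' ∧ y ≠ y' ∧ y ≠ y'' ∧ y' ≠ y'' ∧
      ¬ G.Adj (Sum.inl x) (Sum.inr y) ∧
      G.Adj (Sum.inl x) (Sum.inr y') ∧ G.Adj (Sum.inl x) (Sum.inr y'') ∧
      G.Adj (Sum.inl x') (Sum.inr y) ∧ G.Adj (Sum.inl x'') (Sum.inr y) ∧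
      G.Adj (Sum.inl x') (Sum.inr y') ∧ G.Adj (Sum.inl x') (Sum.inr y'') ∧
      G.Adj (Sum.inl x'') (Sum.inr y') ∧ G.Adj (Sum.inl x'') (Sum.inr y'') := by
  push Not at hnc
  obtain ⟨x, y, hxy⟩ := hnc
  obtain ⟨y', y'', hy, hxy', hxy''⟩ := exists_ne_adj_inr_of_two_le_degree hX (hdeg (.inl x))
  obtain ⟨x', x'', hx, hx'y, hx''y⟩ := exists_ne_adj_inl_of_two_le_degree hY (hdeg (.inr y))
  have key {a : α} {b : β} := adj_of_not_adj_of_adj_of_adj (a := a) (b := b) htree hdiam hxy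
  refine ⟨x, x', x'', y, y', y'', ?_, ?_, hx, ?_, ?_, hy, hxy, hxy', hxy'', hx'y, hx''y,
    key hxy' hx'y, key hxy'' hx'y, key hxy' hx''y, key hxy'' hx''y⟩
  all_goals rintro rfl; contradiction

/-- If `G` is bipartite with minimum degree at least 2, not complete
bipartite, and the bipartite complement of `G` (after removing isolated vertices) is a tree
of diameter at most 3, then `G` contains an induced `K₃,₃` minus an edge `{x,y}`. -/
theorem induced_K33_minus_edge
    {α β : Type*} [Fintype α] [Fintype β] [DecidableEq α] [DecidableEq β]
    (G : SimpleGraph (α ⊕ β)) [DecidableRel G.Adj]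
    (hX : ∀ a a' : α, ¬ G.Adj (Sum.inl a) (Sum.inl a'))
    (hY : ∀ b b' : β, ¬ G.Adj (Sum.inr b) (Sum.inr b'))
    (hdeg : ∀ v : α ⊕ β, 2 ≤ G.degree v)
    (hnc : ¬ ∀ (a : α) (b : β), G.Adj (Sum.inl a) (Sum.inr b))
    (htree : ((bipCompl G).induce (bipCompl G).support).IsTree)
    (hdiam : ∀ u v, ((bipCompl G).induce (bipCompl G).support).dist u v ≤ 3) :
    ∃ (x x' x'' : α) (y y' y'' : β),
      x ≠ x' ∧ x ≠ x'' ∧ x' ≠ x'' ∧ y ≠ y' ∧ y ≠ y'' ∧ y' ≠ y'' ∧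
      ¬ G.Adj (Sum.inl x) (Sum.inr y) ∧
      G.Adj (Sum.inl x) (Sum.inr y') ∧ G.Adj (Sum.inl x) (Sum.inr y'') ∧
      G.Adj (Sum.inl x') (Sum.inr y) ∧ G.Adj (Sum.inl x'') (Sum.inr y) ∧
      G.Adj (Sum.inl x') (Sum.inr y') ∧ G.Adj (Sum.inl x') (Sum.inr y'') ∧
      G.Adj (Sum.inl x'') (Sum.inr y') ∧ G.Adj (Sum.inl x'') (Sum.inr y'') :=
  induced_K33_minus_edge_general G hX hY hdeg hnc htree hdiam
end
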